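/- arXiv:1502.04628 — 4 statements merged into one kernel-verified Lean document; each statement's English description precedes it below -/
import Mathlib

section
/- Let u₀(x) = 2i η e^{i(2ξx + φ)} sech(x₀ - 2ηx) with η ≠ 0, and set a = η + iξ, Γ_ℓ = 2iη e^{x₀ - iφ}, v₀ = u₀* (focusing case, so v₀(x) = -2i η e^{-i(2ξx+φ)} sech(x₀ - 2ηx)). Then the pair Kᵘᵖ(x,y) = Γ_ℓ* e^{-a*(x+y)} / (1 + e^{2(x₀ - 2ηx)}), Kᵈⁿ(x,y) = -(|Γ_ℓ|²/(2η)) e^{-a*(x+y) - 2ax} / (1 + e^{2(x₀ - 2ηx)}) satisfies the Volterra system Kᵘᵖ(x,y) + ∫_x^{(x+y)/2} u₀(z) Kᵈⁿ(z, x+y-z) dz = -(1/2) u₀((x+y)/2) and Kᵈⁿ(x,y) - ∫_x^∞ v₀(z) Kᵘᵖ(z, z+y-x) dz = 0 for all y ≥ x. -/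
/-!
The potential and both kernels are exponentials times the logistic profile
`σ(4ηz - 2x₀) = (1 + e^{2(x₀ - 2ηz)})⁻¹`, since `sech t = 2 eᵗ σ(-2t)`. Multiplying out the
exponentials, both integrands are constant multiples of the derivative `4η σ(1 - σ)` of that
profile, so both integrals are boundary terms by the fundamental theorem of calculus (on `(x, ∞)`
using `σ → 1`), and these boundary terms are exactly `Kᵘᵖ`, `-u₀/2` and `Kᵈⁿ`.
-/

open MeasureTheory Complex

open Real in
lemma Real.one_sub_sigmoid (s : ℝ) : 1 - sigmoid s = sigmoid s * exp (-s) := by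
  rw [sigmoid_mul_rexp_neg, sigmoid_neg]

open Real in
lemma Real.two_div_exp_add_exp_neg (t : ℝ) :
    2 / (exp t + exp (-t)) = 2 * exp t * sigmoid (-(2 * t)) := by
  rw [sigmoid_def, neg_neg, exp_neg, mul_comm 2 t, exp_mul, rpow_two]
  field_simp
  ring

lemma Complex.ofReal_sigmoid (s : ℝ) :
    (Real.sigmoid s : ℂ) = (1 + ((Real.exp (-s) : ℝ) : ℂ))⁻¹ := by
  simp [Real.sigmoid_def]

section SigmoidRamp

open Real Set Filter

variable (k c : ℝ)

lemma hasDerivAt_sigmoid_mul_sub (z : ℝ) :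
    HasDerivAt (fun z => sigmoid (k * z - c))
      (k * (sigmoid (k * z - c) * (1 - sigmoid (k * z - c)))) z := by
  have h := (hasDerivAt_sigmoid (k * z - c)).comp z
    (((hasDerivAt_id' z).const_mul k).sub_const c)
  rwa [mul_one, mul_comm] at h

lemma integral_sigmoid_mul_sub_deriv (a b : ℝ) :
    ∫ z in a..b, k * (sigmoid (k * z - c) * (1 - sigmoid (k * z - c)))
      = sigmoid (k * b - c) - sigmoid (k * a - c) :=
  intervalIntegral.integral_eq_sub_of_hasDerivAt
    (fun z _ => hasDerivAt_sigmoid_mul_sub k c z)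
    ((by fun_prop : Continuous _).intervalIntegrable _ _)

variable {k} in
lemma integral_Ioi_sigmoid_mul_sub_deriv (hk : 0 < k) (a : ℝ) :
    ∫ z in Ioi a, k * (sigmoid (k * z - c) * (1 - sigmoid (k * z - c)))
      = 1 - sigmoid (k * a - c) := by
  refine integral_Ioi_of_hasDerivAt_of_nonneg' (fun z _ => hasDerivAt_sigmoid_mul_sub k c z)
    (fun z _ => ?_) ?_
  · have := sigmoid_le_one (k * z - c)
    have := sigmoid_nonneg (k * z - c)
    positivity
  · exact tendsto_sigmoid_atTop.comp <|
      tendsto_atTop_add_const_right _ _ (tendsto_id.const_mul_atTop hk)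

end SigmoidRamp

namespace OneSoliton

open Real Set ComplexConjugate

noncomputable section

variable (ξ φ x₀ η : ℝ)

/-- `spectralParam`, `normingConst`, `potential`, `kernelUp`, `kernelDown` are the `a`, `Γ_ℓ`,
`u₀`, `Kᵘᵖ`, `Kᵈⁿ` of the one-soliton. -/
def spectralParam : ℂ := η + I * ξ

def normingConst : ℂ := 2 * I * η * Complex.exp (x₀ - I * φ)

def potential (x : ℝ) : ℂ :=
  2 * I * η * Complex.exp (I * ((2 * ξ * x + φ : ℝ) : ℂ)) *
    ((2 / (Real.exp (x₀ - 2 * η * x) + Real.exp (-(x₀ - 2 * η * x))) : ℝ) : ℂ)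

def kernelUp (x y : ℝ) : ℂ :=
  conj (normingConst φ x₀ η) * Complex.exp (-conj (spectralParam ξ η) * ((x + y : ℝ) : ℂ)) /
    (1 + ((Real.exp (2 * (x₀ - 2 * η * x)) : ℝ) : ℂ))

def kernelDown (x y : ℝ) : ℂ :=
  -((‖normingConst φ x₀ η‖ ^ 2 / (2 * η) : ℝ) : ℂ) *
    Complex.exp (-conj (spectralParam ξ η) * ((x + y : ℝ) : ℂ) - 2 * spectralParam ξ η * (x : ℂ)) /
    (1 + ((Real.exp (2 * (x₀ - 2 * η * x)) : ℝ) : ℂ))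

variable {ξ φ x₀ η}

lemma conj_spectralParam : conj (spectralParam ξ η) = η - I * ξ := by
  simp [spectralParam, sub_eq_add_neg]

lemma conj_normingConst : conj (normingConst φ x₀ η) = -2 * I * η * Complex.exp (x₀ + I * φ) := by
  simp [normingConst, ← Complex.exp_conj, sub_eq_add_neg, map_ofNat]

lemma norm_normingConst_sq : ‖normingConst φ x₀ η‖ ^ 2 = 4 * η ^ 2 * Real.exp (2 * x₀) := by
  simp only [normingConst, norm_mul, Complex.norm_exp, Complex.norm_ofNat, norm_I, norm_real,
    Real.norm_eq_abs, mul_pow, sq_abs, ← Real.exp_nat_mul, sub_re, ofReal_re, mul_re, I_re, I_im,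
    ofReal_im]
  norm_num

lemma potential_eq (x : ℝ) :
    potential ξ φ x₀ η x = 4 * I * η * Complex.exp (I * (2 * ξ * x + φ) + (x₀ - 2 * η * x)) *
      (sigmoid (4 * η * x - 2 * x₀) : ℂ) := by
  rw [potential, two_div_exp_add_exp_neg,
    show -(2 * (x₀ - 2 * η * x)) = 4 * η * x - 2 * x₀ by ring]
  push_cast
  rw [Complex.exp_add]
  ring

lemma kernelUp_eq (x y : ℝ) :
    kernelUp ξ φ x₀ η x y = conj (normingConst φ x₀ η) *
      Complex.exp (-conj (spectralParam ξ η) * (x + y)) * (sigmoid (4 * η * x - 2 * x₀) : ℂ) := by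
  rw [kernelUp, div_eq_mul_inv, show 2 * (x₀ - 2 * η * x) = -(4 * η * x - 2 * x₀) by ring,
    ← ofReal_sigmoid]
  push_cast
  ring

lemma kernelDown_eq (hη : η ≠ 0) (x y : ℝ) :
    kernelDown ξ φ x₀ η x y = -2 * η * Complex.exp (-conj (spectralParam ξ η) * (y - x)) *
      ((1 - sigmoid (4 * η * x - 2 * x₀) : ℝ) : ℂ) := by
  have hexp : Complex.exp (2 * x₀) *
      Complex.exp (-conj (spectralParam ξ η) * (x + y) - 2 * spectralParam ξ η * x) =
      Complex.exp (-conj (spectralParam ξ η) * (y - x)) * Complex.exp (-(4 * η * x - 2 * x₀)) := by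
    rw [← Complex.exp_add, ← Complex.exp_add, conj_spectralParam, spectralParam]
    ring_nf
  have hcoef : 4 * η ^ 2 * Real.exp (2 * x₀) / (2 * η) = 2 * η * Real.exp (2 * x₀) := by
    field_simp
    norm_num
  rw [kernelDown, norm_normingConst_sq, hcoef, div_eq_mul_inv,
    show 2 * (x₀ - 2 * η * x) = -(4 * η * x - 2 * x₀) by ring, ← ofReal_sigmoid, one_sub_sigmoid]
  push_cast
  linear_combination (-2 * η * (sigmoid (4 * η * x - 2 * x₀) : ℂ)) * hexp

lemma neg_half_potential_midpoint (x y : ℝ) :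
    -(1 / 2 : ℂ) * potential ξ φ x₀ η ((x + y) / 2) = conj (normingConst φ x₀ η) *
      Complex.exp (-conj (spectralParam ξ η) * (x + y)) *
      (sigmoid (4 * η * ((x + y) / 2) - 2 * x₀) : ℂ) := by
  have hexp :
      Complex.exp (I * (2 * ξ * ((x + y) / 2 : ℝ) + φ) + (x₀ - 2 * η * ((x + y) / 2 : ℝ))) =
      Complex.exp (x₀ + I * φ) * Complex.exp (-conj (spectralParam ξ η) * (x + y)) := by
    rw [← Complex.exp_add, conj_spectralParam]
    push_cast
    ring_nf
  rw [potential_eq, conj_normingConst]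
  linear_combination (-2 * I * η * (sigmoid (4 * η * ((x + y) / 2) - 2 * x₀) : ℂ)) * hexp

lemma potential_mul_kernelDown (hη : η ≠ 0) (s z : ℝ) :
    potential ξ φ x₀ η z * kernelDown ξ φ x₀ η z (s - z) =
      conj (normingConst φ x₀ η) * Complex.exp (-conj (spectralParam ξ η) * s) *
      ((4 * η * (sigmoid (4 * η * z - 2 * x₀) * (1 - sigmoid (4 * η * z - 2 * x₀))) : ℝ) : ℂ) := by
  have hexp : Complex.exp (I * (2 * ξ * z + φ) + (x₀ - 2 * η * z)) *
      Complex.exp (-conj (spectralParam ξ η) * (s - z - z)) =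
      Complex.exp (x₀ + I * φ) * Complex.exp (-conj (spectralParam ξ η) * s) := by
    rw [← Complex.exp_add, ← Complex.exp_add, conj_spectralParam]
    ring_nf
  rw [potential_eq, kernelDown_eq hη, conj_normingConst]
  push_cast
  linear_combination (-8 * I * η ^ 2 * (sigmoid (4 * η * z - 2 * x₀) : ℂ) *
    (1 - (sigmoid (4 * η * z - 2 * x₀) : ℂ))) * hexp

lemma conj_potential_mul_kernelUp (x y z : ℝ) :
    conj (potential ξ φ x₀ η z) * kernelUp ξ φ x₀ η z (z + y - x) =
      -2 * η * Complex.exp (-conj (spectralParam ξ η) * (y - x)) *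
      ((4 * η * (sigmoid (4 * η * z - 2 * x₀) * (1 - sigmoid (4 * η * z - 2 * x₀))) : ℝ) : ℂ) := by
  have hexp : Complex.exp (-I * (2 * ξ * z + φ) + (x₀ - 2 * η * z)) *
      Complex.exp (x₀ + I * φ) * Complex.exp (-conj (spectralParam ξ η) * (z + (z + y - x))) =
      Complex.exp (-conj (spectralParam ξ η) * (y - x)) * Complex.exp (-(4 * η * z - 2 * x₀)) := by
    rw [← Complex.exp_add, ← Complex.exp_add, ← Complex.exp_add, conj_spectralParam]
    ring_nf
  rw [potential_eq, kernelUp_eq, conj_normingConst, one_sub_sigmoid]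
  simp only [map_mul, map_ofNat, conj_I, conj_ofReal, ← Complex.exp_conj, map_add, map_sub]
  push_cast
  linear_combination (norm := ring_nf)
    (-8 * η ^ 2 * (sigmoid (4 * η * z - 2 * x₀) : ℂ) ^ 2) * hexp
  simp only [I_sq]
  ring

lemma integral_potential_mul_kernelDown (hη : η ≠ 0) (s a b : ℝ) :
    ∫ z in a..b, potential ξ φ x₀ η z * kernelDown ξ φ x₀ η z (s - z) =
      conj (normingConst φ x₀ η) * Complex.exp (-conj (spectralParam ξ η) * s) *
      ((sigmoid (4 * η * b - 2 * x₀) - sigmoid (4 * η * a - 2 * x₀) : ℝ) : ℂ) := by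
  simp_rw [potential_mul_kernelDown hη]
  rw [intervalIntegral.integral_const_mul, intervalIntegral.integral_ofReal,
    integral_sigmoid_mul_sub_deriv]

lemma integral_conj_potential_mul_kernelUp (hη : 0 < η) (x y : ℝ) :
    ∫ z in Ioi x, conj (potential ξ φ x₀ η z) * kernelUp ξ φ x₀ η z (z + y - x) =
      -2 * η * Complex.exp (-conj (spectralParam ξ η) * (y - x)) *
      ((1 - sigmoid (4 * η * x - 2 * x₀) : ℝ) : ℂ) := by
  simp_rw [conj_potential_mul_kernelUp]
  rw [integral_const_mul, integral_complex_ofReal,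
    integral_Ioi_sigmoid_mul_sub_deriv _ (by positivity)]

end

end OneSoliton

open OneSoliton

theorem one_soliton_solves_volterra (ξ φ x₀ η : ℝ) (hη : 0 < η)
    (a Γ : ℂ) (ha : a = (η : ℂ) + Complex.I * (ξ : ℂ))
    (hΓ : Γ = 2 * Complex.I * (η : ℂ) * Complex.exp ((x₀ : ℂ) - Complex.I * (φ : ℂ)))
    (u v : ℝ → ℂ)
    (hu : ∀ x : ℝ, u x = 2 * Complex.I * (η : ℂ) *
      Complex.exp (Complex.I * ((2 * ξ * x + φ : ℝ) : ℂ)) *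
      ((2 / (Real.exp (x₀ - 2 * η * x) + Real.exp (-(x₀ - 2 * η * x))) : ℝ) : ℂ))
    (hv : ∀ x : ℝ, v x = (starRingEnd ℂ) (u x))
    (Kup Kdn : ℝ → ℝ → ℂ)
    (hKup : ∀ x y : ℝ, Kup x y =
      (starRingEnd ℂ) Γ * Complex.exp (-(starRingEnd ℂ) a * ((x + y : ℝ) : ℂ)) /
        (1 + ((Real.exp (2 * (x₀ - 2 * η * x)) : ℝ) : ℂ)))
    (hKdn : ∀ x y : ℝ, Kdn x y =
      -((‖Γ‖ ^ 2 / (2 * η) : ℝ) : ℂ) *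
        Complex.exp (-(starRingEnd ℂ) a * ((x + y : ℝ) : ℂ) - 2 * a * (x : ℂ)) /
        (1 + ((Real.exp (2 * (x₀ - 2 * η * x)) : ℝ) : ℂ))) :
    ∀ x y : ℝ, x ≤ y →
      (Kup x y + (∫ z in x..((x + y) / 2), u z * Kdn z (x + y - z))
          = -(1 / 2 : ℂ) * u ((x + y) / 2)) ∧
      (Kdn x y - (∫ z in Set.Ioi x, v z * Kup z (z + y - x)) = 0) := by
  obtain rfl : a = spectralParam ξ η := ha
  obtain rfl : Γ = normingConst φ x₀ η := hΓ
  obtain rfl : u = potential ξ φ x₀ η := funext hu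
  obtain rfl : Kup = kernelUp ξ φ x₀ η := funext₂ hKup
  obtain rfl : Kdn = kernelDown ξ φ x₀ η := funext₂ hKdn
  intro x y _
  simp only [hv]
  constructor
  · rw [kernelUp_eq, integral_potential_mul_kernelDown hη.ne',
      neg_half_potential_midpoint]
    push_cast
    ring
  · rw [kernelDown_eq hη.ne', integral_conj_potential_mul_kernelUp hη, sub_self]
end

section
/- Let Γ ∈ ℂ and a ∈ ℂ with Re a > 0, and define Ω_ℓ(α) = Γ e^{-aα} for α ≥ 0. Suppose Kᵈⁿ(x,z) and K̄ᵈⁿ(x,y) are as in the one-soliton closed form: Kᵈⁿ(x,z) = -(|Γ|²/(2η)) e^{-a*(x+z) - 2ax}/(1 + e^{2(x₀ - 2ηx)}) and K̄ᵈⁿ(x,y) = -(Kᵘᵖ(x,y))* with Kᵘᵖ(x,y) = Γ* e^{-a*(x+y)}/(1 + e^{2(x₀-2ηx)}), where a = η + iξ, η > 0, Γ = 2iη e^{x₀ - iφ}. Then for all y ≥ x, Ω_ℓ(x+y) + ∫_x^∞ Kᵈⁿ(x,z) Ω_ℓ(z+y) dz = -K̄ᵈⁿ(x,y). -/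
/-!
Since `a + conj a = 2 η`, the integrand `Kᵈⁿ(x, z) Ω(z + y)` depends on `z` only through
`e^{-2ηz}`, so the integral equals `-|Γ|² e^{-4ηx} / (4η² (1 + e^{2(x₀ - 2ηx)})) · Γ e^{-a(x+y)}`.
With `|Γ|² = 4η² e^{2x₀}` this is `Γ e^{-a(x+y)} (1 / (1 + e^{2(x₀ - 2ηx)}) - 1)`, which is
`conj Kᵘᵖ(x, y) - Ω(x + y)`.
-/

open MeasureTheory Complex ComplexConjugate

namespace OneSoliton

lemma integral_Ioi_cexp_conj_mul_cexp {a : ℂ} (ha : 0 < a.re) (x y : ℝ) :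
    ∫ z in Set.Ioi x, cexp (-conj a * ↑(x + z) - 2 * a * x) * cexp (-a * ↑(z + y)) =
      ↑(Real.exp (-4 * a.re * x) / (2 * a.re)) * cexp (-a * ↑(x + y)) := by
  have hconj : conj a = 2 * a.re - a := by rw [eq_sub_iff_add_eq', add_conj]; push_cast; ring
  have hsplit (z : ℝ) : cexp (-conj a * ↑(x + z) - 2 * a * x) * cexp (-a * ↑(z + y)) =
      cexp (-conj a * x - 2 * a * x - a * y) * cexp (-(2 * a.re) * z) := by
    rw [← Complex.exp_add, ← Complex.exp_add, hconj]
    push_cast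
    ring_nf
  have hre : (-(2 * a.re) : ℂ).re < 0 := by simpa using ha
  simp_rw [hsplit]
  rw [integral_const_mul, integral_exp_mul_complex_Ioi hre, neg_div_neg_eq, ← mul_div_assoc,
    ← Complex.exp_add, Complex.ofReal_div, Complex.ofReal_exp, div_mul_eq_mul_div,
    ← Complex.exp_add]
  push_cast
  rw [hconj]
  ring_nf

lemma conj_conj_mul_cexp_div (Γ a : ℂ) (s r : ℝ) :
    conj (conj Γ * cexp (-conj a * s) / (1 + r)) = Γ * cexp (-a * s) / (1 + r) := by
  simp [← Complex.exp_conj]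

lemma norm_sq_two_mul_I_mul_cexp (η x₀ φ : ℝ) :
    ‖2 * I * η * cexp (x₀ - I * φ)‖ ^ 2 = 4 * η ^ 2 * Real.exp (2 * x₀) := by
  have hnorm : ‖2 * I * η * cexp (x₀ - I * φ)‖ = 2 * |η| * Real.exp x₀ := by simp [norm_exp]
  rw [hnorm, mul_pow, mul_pow, sq_abs, ← Real.exp_nat_mul]
  norm_num

end OneSoliton

open OneSoliton

theorem one_soliton_marchenko_equation (η ξ φ x₀ : ℝ) (hη : 0 < η)
    (a Γ : ℂ) (ha : a = (η : ℂ) + Complex.I * (ξ : ℂ))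
    (hΓ : Γ = 2 * Complex.I * (η : ℂ) * Complex.exp ((x₀ : ℂ) - Complex.I * (φ : ℂ)))
    (Ω : ℝ → ℂ) (hΩ : ∀ α : ℝ, Ω α = Γ * Complex.exp (-a * (α : ℂ)))
    (Kup Kdn Kbardn : ℝ → ℝ → ℂ)
    (hKup : ∀ x y : ℝ, Kup x y =
      (starRingEnd ℂ) Γ * Complex.exp (-(starRingEnd ℂ) a * ((x + y : ℝ) : ℂ)) /
        (1 + ((Real.exp (2 * (x₀ - 2 * η * x)) : ℝ) : ℂ)))
    (hKdn : ∀ x y : ℝ, Kdn x y =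
      -((‖Γ‖ ^ 2 / (2 * η) : ℝ) : ℂ) *
        Complex.exp (-(starRingEnd ℂ) a * ((x + y : ℝ) : ℂ) - 2 * a * (x : ℂ)) /
        (1 + ((Real.exp (2 * (x₀ - 2 * η * x)) : ℝ) : ℂ)))
    (hKbardn : ∀ x y : ℝ, Kbardn x y = -(starRingEnd ℂ) (Kup x y)) :
    ∀ x y : ℝ, x ≤ y →
      Ω (x + y) + (∫ z in Set.Ioi x, Kdn x z * Ω (z + y)) = -Kbardn x y := by
  intro x y _
  have hre : a.re = η := by simp [ha]
  have hnorm : ‖Γ‖ ^ 2 = 4 * η ^ 2 * Real.exp (2 * x₀) := hΓ ▸ norm_sq_two_mul_I_mul_cexp η x₀ φ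
  have hint : ∫ z in Set.Ioi x, Kdn x z * Ω (z + y) =
      -((‖Γ‖ ^ 2 / (2 * η) : ℝ) : ℂ) / (1 + ((Real.exp (2 * (x₀ - 2 * η * x)) : ℝ) : ℂ)) * Γ *
        ∫ z in Set.Ioi x, cexp (-conj a * ↑(x + z) - 2 * a * x) * cexp (-a * ↑(z + y)) := by
    rw [← integral_const_mul]
    congr 1 with z
    rw [hKdn, hΩ]
    ring
  rw [hint, integral_Ioi_cexp_conj_mul_cexp (hre ▸ hη), hre, hΩ, hKbardn, hKup, neg_neg,
    conj_conj_mul_cexp_div, hnorm, show 2 * (x₀ - 2 * η * x) = 2 * x₀ + -4 * η * x by ring,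
    Real.exp_add]
  generalize hu : Real.exp (2 * x₀) = u
  generalize hv : Real.exp (-4 * η * x) = v
  have hD : (1 + ((u * v : ℝ) : ℂ)) ≠ 0 := by
    exact_mod_cast (by rw [← hu, ← hv]; positivity : (0 : ℝ) < 1 + u * v).ne'
  have hη' : (η : ℂ) ≠ 0 := by exact_mod_cast hη.ne'
  push_cast at hD ⊢
  field_simp
  ring
end

section
/- With S(k) = Σ_{j=1}^n c_j z_j^k (distinct nonzero z_j, nonzero c_j), define the shifted Hankel matrices H⁰_{i,l} = S(i+l-2) and H¹_{i,l} = S(i+l-1) of size n×n. Then the generalized eigenvalues of the pencil H¹ - z H⁰ are exactly z_1, …, z_n; i.e. det(H¹ - z H⁰) = 0 if and only if z ∈ {z_1, …, z_n}. -/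
open Matrix Finset

theorem matrix_pencil_eigenvalues (n : ℕ) (z c : Fin n → ℂ)
    (hz : Function.Injective z) (hz0 : ∀ j, z j ≠ 0) (hc : ∀ j, c j ≠ 0)
    (S : ℕ → ℂ) (hS : ∀ k : ℕ, S k = ∑ j, c j * z j ^ k)
    (H0 H1 : Matrix (Fin n) (Fin n) ℂ)
    (hH0 : ∀ i l, H0 i l = S ((i : ℕ) + (l : ℕ)))
    (hH1 : ∀ i l, H1 i l = S ((i : ℕ) + (l : ℕ) + 1)) :
    ∀ w : ℂ, (H1 - w • H0).det = 0 ↔ ∃ j, w = z j := by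
  intro w
  have key : H1 - w • H0 =
      (Matrix.vandermonde z)ᵀ * Matrix.diagonal (fun j => c j * (z j - w)) *
        Matrix.vandermonde z := by
    ext i l
    simp only [Matrix.sub_apply, Matrix.smul_apply, hH0, hH1, hS, Matrix.mul_apply,
      Matrix.mul_diagonal, Matrix.transpose_apply, Matrix.vandermonde_apply, smul_eq_mul,
      Finset.mul_sum]
    rw [← Finset.sum_sub_distrib]
    apply Finset.sum_congr rfl
    intro j _
    simp only [Matrix.diagonal_apply, mul_ite, mul_zero, Finset.sum_ite_eq', Finset.mem_univ,
      if_true]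
    rw [pow_add, pow_add, pow_succ]
    ring
  rw [key, Matrix.det_mul, Matrix.det_mul, Matrix.det_transpose, Matrix.det_diagonal]
  have hV : (Matrix.vandermonde z).det ≠ 0 := by
    rw [Matrix.det_vandermonde]
    apply Finset.prod_ne_zero_iff.mpr
    intro i _
    apply Finset.prod_ne_zero_iff.mpr
    intro j hj
    exact sub_ne_zero.mpr (fun h => absurd (hz h) (by
      intro hij; rw [hij] at hj; exact absurd (Finset.mem_Ioi.mp hj) (lt_irrefl _)))
  constructor
  · intro h
    rcases mul_eq_zero.mp h with h | h
    · rcases mul_eq_zero.mp h with h | h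
      · exact absurd h hV
      · obtain ⟨j, _, hj⟩ := Finset.prod_eq_zero_iff.mp h
        rcases mul_eq_zero.mp hj with h | h
        · exact absurd h (hc j)
        · exact ⟨j, (sub_eq_zero.mp h).symm⟩
    · exact absurd h hV
  · rintro ⟨j, rfl⟩
    have : (∏ i, c i * (z i - z j)) = 0 :=
      Finset.prod_eq_zero (Finset.mem_univ j) (by simp)
    rw [this, mul_zero, zero_mul]
end

section
/- Let u₀, v₀ be supported in [-L, L] and (K̄ᵘᵖ, K̄ᵈⁿ) solve the left Volterra system, and assume K̄ᵘᵖ and K̄ᵈⁿ vanish for x + y > 2L (i.e. above the anti-bisector through (L,L), as established by the support lemma). Then for x < -L and x + y > -2L, K̄ᵈⁿ(x, y) depends only on x + y: if x₁, x₂ < -L and x₁ + y₁ = x₂ + y₂ ∈ (-2L, 2L], then K̄ᵈⁿ(x₁, y₁) = K̄ᵈⁿ(x₂, y₂). -/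
open MeasureTheory

theorem Kbar_dn_depends_on_sum (L : ℝ) (u v : ℝ → ℂ)
    (hu : Integrable u) (hv : Integrable v)
    (huL : ∀ z : ℝ, |z| > L → u z = 0) (hvL : ∀ z : ℝ, |z| > L → v z = 0)
    (Kup Kdn : ℝ → ℝ → ℂ)
    (heq1 : ∀ x y, x ≤ y →
      Kup x y + ∫ z in Set.Ioi x, u z * Kdn z (z + y - x) = 0)
    (heq2 : ∀ x y, x ≤ y →
      Kdn x y - (∫ z in x..((x + y) / 2), v z * Kup z (x + y - z))
        = (1 / 2 : ℂ) * v ((x + y) / 2))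
    (hvanish : ∀ x y, x ≤ y → x + y > 2 * L → Kup x y = 0 ∧ Kdn x y = 0) :
    ∀ x₁ y₁ x₂ y₂ : ℝ, x₁ < -L → x₂ < -L →
      x₁ + y₁ = x₂ + y₂ → -2 * L < x₁ + y₁ → x₁ + y₁ ≤ 2 * L →
      Kdn x₁ y₁ = Kdn x₂ y₂ := by
  intro x₁ y₁ x₂ y₂ hx1 hx2 hsum hlo hhi
  have hx1y1 : x₁ ≤ y₁ := by linarith
  have hx2y2 : x₂ ≤ y₂ := by linarith
  have e1 := heq2 x₁ y₁ hx1y1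
  have e2 := heq2 x₂ y₂ hx2y2
  rw [← hsum] at e2
  have hzero : ∀ z : ℝ, z < -L → v z * Kup z (x₁ + y₁ - z) = 0 := by
    intro z hz
    rw [hvL z (by rw [abs_of_neg (by linarith)]; linarith), zero_mul]
  have hint : (∫ z in x₁..((x₁ + y₁) / 2), v z * Kup z (x₁ + y₁ - z))
      = ∫ z in x₂..((x₁ + y₁) / 2), v z * Kup z (x₁ + y₁ - z) := by
    rw [intervalIntegral.integral_of_le (by linarith),
        intervalIntegral.integral_of_le (by linarith)]
    rw [← integral_indicator measurableSet_Ioc, ← integral_indicator measurableSet_Ioc]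
    congr 1
    funext z
    by_cases hz1 : z ∈ Set.Ioc x₁ ((x₁ + y₁) / 2) <;>
      by_cases hz2 : z ∈ Set.Ioc x₂ ((x₁ + y₁) / 2)
    · rw [Set.indicator_of_mem hz1, Set.indicator_of_mem hz2]
    · rw [Set.indicator_of_mem hz1, Set.indicator_of_notMem hz2]
      have hzle : z ≤ x₂ := by
        by_contra h
        exact hz2 ⟨lt_of_not_ge h, hz1.2⟩
      exact hzero z (by linarith)
    · rw [Set.indicator_of_notMem hz1, Set.indicator_of_mem hz2]
      have hzle : z ≤ x₁ := by
        by_contra h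
        exact hz1 ⟨lt_of_not_ge h, hz2.2⟩
      exact (hzero z (by linarith)).symm
    · rw [Set.indicator_of_notMem hz1, Set.indicator_of_notMem hz2]
  linear_combination e1 - e2 + hint
end
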